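/- For every p ≥ 2, a 2p-dimensional 2-step nilpotent Lie algebra over K (K = ℝ or ℂ) with characteristic sequence (2,1,…,1) admits a symplectic form if and only if it is isomorphic to h₃ ⊕ K^{2p−3}, the direct product of the 3-dimensional Heisenberg Lie algebra with the (2p−3)-dimensional abelian Lie algebra. -/

import Mathlib

/-- A symplectic form on a Lie algebra `g` over `K`: a `K`-bilinear form which is
alternating, nondegenerate and closed, i.e.
`θ ⁅X,Y⁆ Z + θ ⁅Y,Z⁆ X + θ ⁅Z,X⁆ Y = 0` for all `X Y Z`. -/
def IsSymplecticForm (K : Type*) [RCLike K] (g : Type*) [LieRing g] [LieAlgebra K g]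
    (θ : g → g → K) : Prop :=
  (∀ (a : K) (X Y Z : g), θ (a • X + Y) Z = a * θ X Z + θ Y Z) ∧
  (∀ (a : K) (X Y Z : g), θ X (a • Y + Z) = a * θ X Y + θ X Z) ∧
  (∀ X : g, θ X X = 0) ∧
  (∀ X : g, (∀ Y : g, θ X Y = 0) → X = 0) ∧
  (∀ X Y Z : g, θ ⁅X, Y⁆ Z + θ ⁅Y, Z⁆ X + θ ⁅Z, X⁆ Y = 0)
/-- A Lie algebra is 2-step nilpotent if `[[g,g],g] = 0` and `[g,g] ≠ 0`. -/
def IsTwoStepNilpotent (g : Type*) [LieRing g] : Prop :=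
  (∀ X Y Z : g, ⁅⁅X, Y⁆, Z⁆ = 0) ∧ ∃ X Y : g, ⁅X, Y⁆ ≠ 0
/-- A 2-step nilpotent Lie algebra has characteristic sequence `(2,…,2,1,…,1)` with exactly
`k` twos iff the maximum of `rank (ad X) = dim ⁅X, g⁆` over `X ∈ g \ [g,g]` equals `k`. -/
def HasCharSeqTwos (K : Type*) [RCLike K] (g : Type*) [LieRing g] [LieAlgebra K g]
    (k : ℕ) : Prop :=
  (∀ X : g, X ∉ LieAlgebra.derivedSeries K g 1 →
      Module.finrank K ↥(LinearMap.range (LieAlgebra.ad K g X)) ≤ k) ∧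
  ∃ X : g, X ∉ LieAlgebra.derivedSeries K g 1 ∧
      Module.finrank K ↥(LinearMap.range (LieAlgebra.ad K g X)) = k
/-- The direct product `h_{2p+1} ⊕ K^m` of the `(2p+1)`-dimensional Heisenberg Lie algebra
(with basis `X_1,…,X_{2p},Z` and nonzero brackets `⁅X_{2i-1}, X_{2i}⁆ = Z`) with the
`m`-dimensional abelian Lie algebra, realized on
`((Fin p → K) × (Fin p → K)) × (K × (Fin m → K))` with bracket
`⁅(a,b,c,d), (a',b',c',d')⁆ = (0, 0, ∑ i, (a i * b' i - a' i * b i), 0)`. -/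
abbrev HeisenbergAbelian (K : Type*) [RCLike K] (p m : ℕ) : Type _ :=
  ((Fin p → K) × (Fin p → K)) × (K × (Fin m → K))

namespace HeisenbergAbelian

variable {K : Type*} [RCLike K] {p m : ℕ}

/-- The Lie bracket of `h_{2p+1} ⊕ K^m`. -/
def brak (x y : HeisenbergAbelian K p m) : HeisenbergAbelian K p m :=
  ((0, 0), (∑ i, (x.1.1 i * y.1.2 i - y.1.1 i * x.1.2 i), 0))

instance (priority := 5000) : LieRing (HeisenbergAbelian K p m) where
  bracket := brak
  add_lie x y z := by
    show brak (x + y) z = brak x z + brak y z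
    simp only [brak, Prod.fst_add, Prod.snd_add, Pi.add_apply, Prod.mk_add_mk, add_zero,
      Prod.mk.injEq, true_and, and_true, ← Finset.sum_add_distrib]
    exact Finset.sum_congr rfl fun i _ => by ring
  lie_add x y z := by
    show brak x (y + z) = brak x y + brak x z
    simp only [brak, Prod.fst_add, Prod.snd_add, Pi.add_apply, Prod.mk_add_mk, add_zero,
      Prod.mk.injEq, true_and, and_true, ← Finset.sum_add_distrib]
    exact Finset.sum_congr rfl fun i _ => by ring
  lie_self x := by
    show brak x x = 0
    simp only [brak, sub_self, Finset.sum_const_zero]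
    rfl
  leibniz_lie x y z := by
    show brak x (brak y z) = brak (brak x y) z + brak y (brak x z)
    simp only [brak, Prod.mk_add_mk, Prod.mk.injEq, Pi.zero_apply, mul_zero, zero_mul,
      sub_self, Finset.sum_const_zero, add_zero, zero_add, and_true, true_and]

instance (priority := 5000) : LieAlgebra K (HeisenbergAbelian K p m) where
  lie_smul t x y := by
    show brak x (t • y) = t • brak x y
    simp only [brak, Prod.smul_fst, Prod.smul_snd, Pi.smul_apply, Prod.smul_mk, smul_zero,
      smul_eq_mul, Prod.mk.injEq, true_and, and_true, Finset.mul_sum]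
    exact Finset.sum_congr rfl fun i _ => by ring

end HeisenbergAbelian

/-!
If every `ad X` has rank at most one, all brackets are multiples of one central vector `z`,
say `⁅U, V⁆ = c(U, V) • z`. For a symplectic form `θ`, closedness then reads
`c(U, V) θ(z, W) + c(V, W) θ(z, U) + c(W, U) θ(z, V) = 0`, so `⁅U, V⁆ = 0` as soon as `U` and `V`
lie in the hyperplane `θ(z, ·) = 0`. Choosing `x, y` with `⁅x, y⁆ = z` and `θ(z, y) = 1`, the
common kernel of `θ(z, ·)`, `θ(⁅·, y⁆, y)` and `θ(·, y)` is central and complementary to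
`span {x, y, z}`, which exhibits `g ≅ h₃ ⊕ K^{2p-3}`. Conversely `h₃ ⊕ K^{2p-3}` carries the
symplectic form `X₁* ∧ Z* + ω`, where `ω` is any symplectic form on the even-dimensional span of
`X₂` and the abelian factor.
-/

open Module LieAlgebra

section LinearAlgebra

variable {R : Type*} [CommRing R]

def stdSymplecticForm (ι : Type*) [Fintype ι] : LinearMap.BilinForm R ((ι → R) × (ι → R)) :=
  (dotProductBilin R R).compl₁₂ (LinearMap.fst R _ _) (LinearMap.snd R _ _) -
    (dotProductBilin R R).compl₁₂ (LinearMap.snd R _ _) (LinearMap.fst R _ _)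

@[simp]
theorem stdSymplecticForm_apply {ι : Type*} [Fintype ι] (u v : (ι → R) × (ι → R)) :
    stdSymplecticForm ι u v = u.1 ⬝ᵥ v.2 - u.2 ⬝ᵥ v.1 :=
  rfl

theorem stdSymplecticForm_isAlt (ι : Type*) [Fintype ι] : (stdSymplecticForm (R := R) ι).IsAlt :=
  fun u => by simp [dotProduct_comm u.1]

theorem stdSymplecticForm_separatingLeft (ι : Type*) [Fintype ι] :
    (stdSymplecticForm (R := R) ι).SeparatingLeft := by
  intro u hu
  have h₁ : u.1 = 0 := dotProduct_eq_zero_iff.1 fun w => by simpa using hu (0, w)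
  have h₂ : u.2 = 0 := dotProduct_eq_zero_iff.1 fun w => by simpa using hu (w, 0)
  exact Prod.ext h₁ h₂

variable {F V : Type*} [Field F] [AddCommGroup V] [Module F V] [FiniteDimensional F V]

theorem exists_isAlt_separatingLeft_of_even_finrank (h : Even (finrank F V)) :
    ∃ ω : LinearMap.BilinForm F V, ω.IsAlt ∧ ω.SeparatingLeft := by
  obtain ⟨t, ht⟩ := h
  let L : V ≃ₗ[F] (Fin t → F) × (Fin t → F) := LinearEquiv.ofFinrankEq _ _ (by simp [ht])
  refine ⟨(stdSymplecticForm (Fin t)).compl₁₂ L L, fun v => stdSymplecticForm_isAlt _ (L v),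
    fun v hv => L.map_eq_zero_iff.1 (stdSymplecticForm_separatingLeft _ (L v) fun w => ?_)⟩
  simpa using hv (L.symm w)

theorem mem_span_singleton_of_finrank_le_one {S : Submodule F V} (hS : finrank F S ≤ 1)
    {a b : V} (ha : a ∈ S) (ha₀ : a ≠ 0) (hb : b ∈ S) : b ∈ F ∙ a := by
  have : F ∙ a = S := Submodule.eq_of_le_of_finrank_le
    ((Submodule.span_singleton_le_iff_mem _ _).2 ha) (by rwa [finrank_span_singleton ha₀])
  exact this ▸ hb

end LinearAlgebra

section LieAlgebra

variable {K : Type*} [RCLike K] {g : Type*} [LieRing g] [LieAlgebra K g]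

namespace IsSymplecticForm

section

variable {θ : g → g → K} (hθ : IsSymplecticForm K g θ)
include hθ

theorem zero_left (Z : g) : θ 0 Z = 0 := by
  simpa using hθ.1 1 0 0 Z

theorem zero_right (X : g) : θ X 0 = 0 := by
  simpa using hθ.2.1 1 X 0 0

theorem apply_self (X : g) : θ X X = 0 := hθ.2.2.1 X

theorem eq_zero_of_forall (X : g) (h : ∀ Y, θ X Y = 0) : X = 0 := hθ.2.2.2.1 X h

theorem closed (X Y Z : g) : θ ⁅X, Y⁆ Z + θ ⁅Y, Z⁆ X + θ ⁅Z, X⁆ Y = 0 := hθ.2.2.2.2 X Y Z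

def toBilinForm : LinearMap.BilinForm K g :=
  LinearMap.mk₂ K θ (fun X Y Z => by simpa using hθ.1 1 X Y Z)
    (fun a X Z => by simpa [hθ.zero_left] using hθ.1 a X 0 Z)
    (fun X Y Z => by simpa using hθ.2.1 1 X Y Z)
    (fun a X Y => by simpa [hθ.zero_right] using hθ.2.1 a X Y 0)

theorem comp_lieEquiv {h : Type*} [LieRing h] [LieAlgebra K h] (e : h ≃ₗ⁅K⁆ g) :
    IsSymplecticForm K h (fun X Y => θ (e X) (e Y)) := by
  obtain ⟨hl, hr, halt, hsep, hclosed⟩ := hθ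
  refine ⟨fun a X Y Z => ?_, fun a X Y Z => ?_, fun X => halt (e X), fun X hX => ?_,
    fun X Y Z => ?_⟩
  · simp only [map_add, map_smul, hl]
  · simp only [map_add, map_smul, hr]
  · exact e.injective (by simpa using hsep (e X) fun Y => by simpa using hX (e.symm Y))
  · simpa only [LieEquiv.map_lie] using hclosed (e X) (e Y) (e Z)

end

theorem of_bilinForm (B : LinearMap.BilinForm K g) (halt : B.IsAlt) (hsep : B.SeparatingLeft)
    (hclosed : ∀ X Y Z : g, B ⁅X, Y⁆ Z + B ⁅Y, Z⁆ X + B ⁅Z, X⁆ Y = 0) :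
    IsSymplecticForm K g (B · ·) :=
  ⟨fun a X Y Z => by simp, fun a X Y Z => by simp, halt, hsep, hclosed⟩

variable {B : LinearMap.BilinForm K g} (hB : IsSymplecticForm K g (B · ·))
include hB

theorem lie_eq_zero_of_apply_eq_zero {z : g} (hz : z ≠ 0) (hline : ∀ U V : g, ⁅U, V⁆ ∈ K ∙ z)
    {U V : g} (hU : B z U = 0) (hV : B z V = 0) : ⁅U, V⁆ = 0 := by
  obtain ⟨W, hW⟩ : ∃ W, B z W ≠ 0 := by
    by_contra! h
    exact hz (hB.eq_zero_of_forall z h)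
  obtain ⟨c, hc⟩ := Submodule.mem_span_singleton.1 (hline U V)
  obtain ⟨c₁, hc₁⟩ := Submodule.mem_span_singleton.1 (hline V W)
  obtain ⟨c₂, hc₂⟩ := Submodule.mem_span_singleton.1 (hline W U)
  have h := hB.closed U V W
  rw [← hc, ← hc₁, ← hc₂] at h
  simp only [map_smul, LinearMap.smul_apply, smul_eq_mul, hU, hV, mul_zero, add_zero] at h
  rw [← hc, (mul_eq_zero.1 h).resolve_right hW, zero_smul]

theorem exists_lie_eq_and_apply_eq {x₀ y₀ : g} (hz : ⁅x₀, y₀⁆ ≠ 0)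
    (hline : ∀ U V : g, ⁅U, V⁆ ∈ K ∙ ⁅x₀, y₀⁆) (hcen : ∀ V : g, ⁅⁅x₀, y₀⁆, V⁆ = 0) :
    ∃ x y : g, ⁅x, y⁆ = ⁅x₀, y₀⁆ ∧ B ⁅x₀, y₀⁆ x = 0 ∧ B ⁅x₀, y₀⁆ y = 1 ∧ B x y = 0 := by
  set z := ⁅x₀, y₀⁆
  have halt : ∀ X, B X X = 0 := hB.apply_self
  obtain ⟨a, b, hab, hb⟩ : ∃ a b : g, ⁅a, b⁆ = z ∧ B z b ≠ 0 := by
    by_cases hy : B z y₀ = 0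
    · exact ⟨-y₀, x₀, by rw [neg_lie, lie_skew],
        fun hx => hz (hB.lie_eq_zero_of_apply_eq_zero hz hline hx hy)⟩
    · exact ⟨x₀, y₀, rfl, hy⟩
  set y := (B z b)⁻¹ • b
  have hy : B z y = 1 := by simp [y, hb]
  set x₁ := B z b • a
  have hx₁ : ⁅x₁, y⁆ = z := by simp [x₁, y, smul_smul, hb, hab]
  refine ⟨x₁ - B z x₁ • y - B x₁ y • z, y, ?_, ?_, hy, ?_⟩
  · simp [sub_lie, hx₁, hcen]
  · simp only [map_sub, map_smul, smul_eq_mul, hy, halt]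
    ring
  · simp only [map_sub, map_smul, LinearMap.sub_apply, LinearMap.smul_apply, smul_eq_mul, hy, halt]
    ring

end IsSymplecticForm

theorem derivedSeries_one_le_center (h : ∀ X Y Z : g, ⁅⁅X, Y⁆, Z⁆ = 0) :
    derivedSeries K g 1 ≤ center K g := by
  rw [derivedSeries_def, derivedSeriesOfIdeal_succ, derivedSeriesOfIdeal_zero,
    LieSubmodule.lie_le_iff]
  exact fun X _ Y _ V => by rw [← lie_skew, h, neg_zero]

theorem HasCharSeqTwos.finrank_range_ad_le {k : ℕ} (hc : HasCharSeqTwos K g k)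
    (h : ∀ X Y Z : g, ⁅⁅X, Y⁆, Z⁆ = 0) (W : g) :
    finrank K (LinearMap.range (ad K g W)) ≤ k := by
  by_cases hW : W ∈ derivedSeries K g 1
  · have hcen := (LieModule.mem_maxTrivSubmodule K g g W).1 (derivedSeries_one_le_center h hW)
    have : ad K g W = 0 := LinearMap.ext fun V => by
      rw [ad_apply, ← lie_skew, hcen, neg_zero, LinearMap.zero_apply]
    rw [this, LinearMap.range_zero, finrank_bot]
    exact k.zero_le
  · exact hc.1 W hW

variable [FiniteDimensional K g]

theorem lie_mem_span_lie_of_finrank_range_ad_le_one {W A : g}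
    (hW : finrank K (LinearMap.range (ad K g W)) ≤ 1) (hA : ⁅W, A⁆ ≠ 0) (B : g) :
    ⁅W, B⁆ ∈ K ∙ ⁅W, A⁆ :=
  mem_span_singleton_of_finrank_le_one hW ⟨A, rfl⟩ hA ⟨B, rfl⟩

theorem lie_mem_span_of_finrank_range_ad_le_one
    (hrank : ∀ W : g, finrank K (LinearMap.range (ad K g W)) ≤ 1) {x y : g} (hxy : ⁅x, y⁆ ≠ 0)
    (U V : g) : ⁅U, V⁆ ∈ K ∙ ⁅x, y⁆ := by
  by_contra hUV
  have hUV₀ : ⁅U, V⁆ ≠ 0 := fun h => hUV (h ▸ Submodule.zero_mem _)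
  have hdisj : ∀ a, a ∈ K ∙ ⁅x, y⁆ → a ∈ K ∙ ⁅U, V⁆ → a = 0 :=
    Submodule.disjoint_def.1 (Submodule.disjoint_span_singleton.2 fun h => absurd h hUV)
  have hskew : ∀ {a b : g}, K ∙ ⁅b, a⁆ = K ∙ ⁅a, b⁆ := by
    intro a b
    rw [← lie_skew, ← Set.neg_singleton, Submodule.span_neg]
  have hUy : ⁅U, y⁆ = 0 := by
    refine hdisj _ ?_ (lie_mem_span_lie_of_finrank_range_ad_le_one (hrank U) hUV₀ y)
    rw [← lie_skew U y, ← hskew]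
    exact neg_mem (lie_mem_span_lie_of_finrank_range_ad_le_one (hrank y)
      (by rwa [← lie_skew, neg_ne_zero]) U)
  have hxV : ⁅x, V⁆ = 0 := by
    refine hdisj _ (lie_mem_span_lie_of_finrank_range_ad_le_one (hrank x) hxy V) ?_
    rw [← lie_skew x V, ← hskew]
    exact neg_mem (lie_mem_span_lie_of_finrank_range_ad_le_one (hrank V)
      (by rwa [← lie_skew, neg_ne_zero]) x)
  -- `ad (x + U)` would have rank two
  have h := lie_mem_span_lie_of_finrank_range_ad_le_one (hrank (x + U)) (A := y)
    (by rwa [add_lie, hUy, add_zero]) V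
  rw [add_lie, add_lie, hUy, hxV, add_zero, zero_add] at h
  exact hUV h

namespace HeisenbergAbelian

variable {m : ℕ}

theorem lie_def (u v : HeisenbergAbelian K 1 m) :
    ⁅u, v⁆ = ((0, 0), (u.1.1 0 * v.1.2 0 - v.1.1 0 * u.1.2 0, 0)) := by
  simp [Bracket.bracket, brak]

def symplecticForm (ω : LinearMap.BilinForm K ((Fin 1 → K) × (Fin m → K))) :
    LinearMap.BilinForm K (HeisenbergAbelian K 1 m) :=
  let x : HeisenbergAbelian K 1 m →ₗ[K] K :=
    LinearMap.proj 0 ∘ₗ LinearMap.fst K _ _ ∘ₗ LinearMap.fst K _ _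
  let z : HeisenbergAbelian K 1 m →ₗ[K] K := LinearMap.fst K _ _ ∘ₗ LinearMap.snd K _ _
  let π := (LinearMap.snd K _ _ ∘ₗ LinearMap.fst K _ _).prod
    (LinearMap.snd K _ _ ∘ₗ LinearMap.snd K _ _)
  (LinearMap.mul K K).compl₁₂ x z - (LinearMap.mul K K).compl₁₂ z x + ω.compl₁₂ π π

@[simp]
theorem symplecticForm_apply (ω : LinearMap.BilinForm K ((Fin 1 → K) × (Fin m → K)))
    (u v : HeisenbergAbelian K 1 m) :
    symplecticForm ω u v = u.1.1 0 * v.2.1 - u.2.1 * v.1.1 0 + ω (u.1.2, u.2.2) (v.1.2, v.2.2) :=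
  rfl

theorem isSymplecticForm_symplecticForm {ω : LinearMap.BilinForm K ((Fin 1 → K) × (Fin m → K))}
    (halt : ω.IsAlt) (hsep : ω.SeparatingLeft) :
    IsSymplecticForm K (HeisenbergAbelian K 1 m) (symplecticForm ω · ·) := by
  refine IsSymplecticForm.of_bilinForm _ (fun u => by simp [halt.self_eq_zero, mul_comm])
    (fun u hu => ?_) fun u v w => by simp [lie_def, Prod.mk_zero_zero]; ring
  have hx : u.1.1 = 0 := funext fun i => by
    simpa [Subsingleton.elim i 0, Prod.mk_zero_zero] using hu ((0, 0), (1, 0))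
  have hz : u.2.1 = 0 := by simpa [hx, Prod.mk_zero_zero] using hu ((1, 0), (0, 0))
  have hπ : (u.1.2, u.2.2) = 0 := hsep _ fun w => by simpa [hx, hz] using hu ((0, w.1), (0, w.2))
  ext : 2 <;> simp_all [Prod.ext_iff]

theorem exists_isSymplecticForm (hm : Odd m) :
    ∃ θ, IsSymplecticForm K (HeisenbergAbelian K 1 m) θ := by
  obtain ⟨ω, halt, hsep⟩ := exists_isAlt_separatingLeft_of_even_finrank
    (F := K) (V := (Fin 1 → K) × (Fin m → K)) (by simpa [add_comm 1] using hm.add_one)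
  exact ⟨_, isSymplecticForm_symplecticForm halt hsep⟩

theorem nonempty_lieEquiv_of_ker_le_center (hdim : finrank K g = m + 3)
    (Ψ : g →ₗ[K] K × K × K) {x y : g}
    (hx : Ψ x = (1, 0, 0)) (hy : Ψ y = (0, 1, 0)) (hz : Ψ ⁅x, y⁆ = (0, 0, 1))
    (hzc : ∀ V : g, ⁅⁅x, y⁆, V⁆ = 0) (hker : ∀ W : g, Ψ W = 0 → ∀ V : g, ⁅W, V⁆ = 0) :
    Nonempty (g ≃ₗ⁅K⁆ HeisenbergAbelian K 1 m) := by
  set z := ⁅x, y⁆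
  have hsurj : LinearMap.range Ψ = ⊤ := LinearMap.range_eq_top.2 fun ⟨a, b, c⟩ =>
    ⟨a • x + b • y + c • z, by simp [hx, hy, hz]⟩
  have hker_dim : finrank K (LinearMap.ker Ψ) = m := by
    have := LinearMap.finrank_range_add_finrank_ker Ψ
    rw [hsurj, finrank_top, hdim] at this
    simp at this
    omega
  let ι : (Fin m → K) ≃ₗ[K] LinearMap.ker Ψ := LinearEquiv.ofFinrankEq _ _ (by simp [hker_dim])
  let F : HeisenbergAbelian K 1 m →ₗ[K] g :=
    (LinearMap.proj 0 ∘ₗ LinearMap.fst K _ _ ∘ₗ LinearMap.fst K _ _).smulRight x +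
      (LinearMap.proj 0 ∘ₗ LinearMap.snd K _ _ ∘ₗ LinearMap.fst K _ _).smulRight y +
      (LinearMap.fst K _ _ ∘ₗ LinearMap.snd K _ _).smulRight z +
      (LinearMap.ker Ψ).subtype ∘ₗ ι.toLinearMap ∘ₗ LinearMap.snd K _ _ ∘ₗ LinearMap.snd K _ _
  have hF (u : HeisenbergAbelian K 1 m) :
      F u = u.1.1 0 • x + u.1.2 0 • y + u.2.1 • z + ι u.2.2 := rfl
  have hΨF (u : HeisenbergAbelian K 1 m) : Ψ (F u) = (u.1.1 0, u.1.2 0, u.2.1) := by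
    simp [hF, hx, hy, hz, LinearMap.mem_ker.1 (ι u.2.2).2]
  have hzc' (V : g) : ⁅V, z⁆ = 0 := by rw [← lie_skew, hzc, neg_zero]
  have hιc (d : Fin m → K) (V : g) : ⁅(ι d : g), V⁆ = 0 := hker _ (ι d).2 V
  have hιc' (d : Fin m → K) (V : g) : ⁅V, (ι d : g)⁆ = 0 := by rw [← lie_skew, hιc, neg_zero]
  have hyx : ⁅y, x⁆ = -z := (lie_skew y x).symm
  let F' : HeisenbergAbelian K 1 m →ₗ⁅K⁆ g :=
    { F with
      map_lie' := fun {u v} => by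
        simp only [LinearMap.toFun_eq_coe, hF, lie_def, map_zero, ZeroMemClass.coe_zero,
          Pi.zero_apply, add_zero, lie_add, add_lie, lie_smul, smul_lie, lie_self, hzc, hzc',
          hιc, hιc', hyx, smul_zero]
        module }
  have hinj : Function.Injective F := by
    refine (injective_iff_map_eq_zero F).2 fun u hu => ?_
    have h := (hΨF u).symm
    rw [hu, map_zero] at h
    obtain ⟨hX, hY, hZ⟩ : u.1.1 0 = 0 ∧ u.1.2 0 = 0 ∧ u.2.1 = 0 := by simpa using h
    have hd : u.2.2 = 0 := by simpa [hF, hX, hY, hZ] using hu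
    refine Prod.ext (Prod.ext ?_ ?_) (Prod.ext hZ hd) <;>
      exact funext fun i => by simp [Subsingleton.elim i 0, hX, hY]
  have hbij : Function.Bijective F' := ⟨hinj,
    (LinearMap.injective_iff_surjective_of_finrank_eq_finrank (by simp [hdim]; ring)).1 hinj⟩
  exact ⟨(LieEquiv.ofBijective F' hbij).symm⟩

end HeisenbergAbelian

theorem nonempty_lieEquiv_heisenbergAbelian_of_isSymplecticForm {m : ℕ}
    (hdim : finrank K g = m + 3) (h2 : IsTwoStepNilpotent g)
    (hrank : ∀ W : g, finrank K (LinearMap.range (ad K g W)) ≤ 1)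
    {B : LinearMap.BilinForm K g} (hB : IsSymplecticForm K g (B · ·)) :
    Nonempty (g ≃ₗ⁅K⁆ HeisenbergAbelian K 1 m) := by
  obtain ⟨h21, x₀, y₀, hz⟩ := h2
  have hline := lie_mem_span_of_finrank_range_ad_le_one hrank hz
  obtain ⟨x, y, hxy, hzx, hzy, hxy'⟩ := hB.exists_lie_eq_and_apply_eq hz hline (h21 x₀ y₀)
  set z := ⁅x₀, y₀⁆
  have hcen : ∀ V : g, ⁅z, V⁆ = 0 := h21 x₀ y₀
  have halt : ∀ X, B X X = 0 := hB.apply_self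
  -- since `B z y = 1`, the first coordinate is the coefficient of `⁅W, y⁆` on `z`
  let Ψ : g →ₗ[K] K × K × K :=
    { toFun := fun W => (B ⁅W, y⁆ y, B z W, B W y)
      map_add' := fun V W => by simp [add_lie]
      map_smul' := fun c W => by simp [smul_lie] }
  refine HeisenbergAbelian.nonempty_lieEquiv_of_ker_le_center hdim Ψ (x := x) (y := y) ?_ ?_ ?_
    (hxy ▸ hcen) fun W hW V => ?_
  · simp [Ψ, hxy, hzx, hzy, hxy']
  · simp [Ψ, hzy, halt]
  · simp [Ψ, hxy, hcen, hzy, halt]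
  simp only [Ψ, LinearMap.coe_mk, AddHom.coe_mk, Prod.mk_eq_zero] at hW
  obtain ⟨hWy, hzW, -⟩ := hW
  have hWy' : ⁅W, y⁆ = 0 := by
    obtain ⟨c, hc⟩ := Submodule.mem_span_singleton.1 (hline W y)
    rw [← hc, map_smul, LinearMap.smul_apply, hzy, smul_eq_mul, mul_one] at hWy
    rw [← hc, hWy, zero_smul]
  have hV : ⁅W, V - B z V • y⁆ = 0 :=
    hB.lie_eq_zero_of_apply_eq_zero hz hline hzW (by simp [hzy])
  rwa [lie_sub, lie_smul, hWy', smul_zero, sub_zero] at hV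

end LieAlgebra

/-- For every `p ≥ 2`, a `2p`-dimensional 2-step nilpotent Lie algebra over `K` with
characteristic sequence `(2,1,…,1)` admits a symplectic form if and only if it is
isomorphic to `h₃ ⊕ K^{2p-3}`, the direct product of the 3-dimensional Heisenberg Lie
algebra with the `(2p-3)`-dimensional abelian Lie algebra. -/
theorem twoPDim_charSeqOne_symplectic_iff
    (K : Type*) [RCLike K] (g : Type*) [LieRing g] [LieAlgebra K g] [FiniteDimensional K g]
    (p : ℕ) (hp : 2 ≤ p)
    (h2 : IsTwoStepNilpotent g) (hdim : Module.finrank K g = 2 * p)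
    (hc : HasCharSeqTwos K g 1) :
    (∃ θ : g → g → K, IsSymplecticForm K g θ) ↔
      Nonempty (g ≃ₗ⁅K⁆ HeisenbergAbelian K 1 (2 * p - 3)) := by
  constructor
  · rintro ⟨θ, hθ⟩
    exact nonempty_lieEquiv_heisenbergAbelian_of_isSymplecticForm (by omega) h2
      (hc.finrank_range_ad_le h2.1) (B := hθ.toBilinForm) hθ
  · rintro ⟨e⟩
    obtain ⟨θ, hθ⟩ := HeisenbergAbelian.exists_isSymplecticForm (K := K) (m := 2 * p - 3)
      ⟨p - 2, by omega⟩
    exact ⟨_, hθ.comp_lieEquiv e⟩
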